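/- arXiv:1908.11478 — 3 statements merged into one kernel-verified Lean document; each statement's English description precedes it below -/
import Mathlib

section
/- For every integer k ≥ 3, if a finite connected graph G contains no induced subgraph isomorphic to the disjoint union of an isolated vertex and a path on k vertices (P_1 + P_k), then the cop number of G is at most k − 1. -/
open SimpleGraph

/-- The sequence of positions in a play of the Cops and Robber game:
`(copsRobberSeq init F rob r₀ t).1` are the cop positions and `.2` the robber
position after round `t`. In each round the cops move first, then the robber. -/
def copsRobberSeq {V : Type*} {n : ℕ} (init : Fin n → V)
    (F : (Fin n → V) → V → (Fin n → V)) (rob : (Fin n → V) → V → V) (r₀ : V) :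
    ℕ → (Fin n → V) × V
  | 0 => (init, r₀)
  | t + 1 =>
      let p := copsRobberSeq init F rob r₀ t
      let c' := F p.1 p.2
      (c', rob c' p.2)

/-- `CopWinWith G n` means that `n` cops have a strategy on the graph `G`
(choice of initial positions and a move function, each move staying put or
going to an adjacent vertex) that captures the robber against every robber
strategy: at some round, some cop occupies the robber's current vertex. -/
def CopWinWith {V : Type*} (G : SimpleGraph V) (n : ℕ) : Prop :=
  ∃ (init : Fin n → V) (F : (Fin n → V) → V → (Fin n → V)),
    (∀ c r i, F c r i = c i ∨ G.Adj (c i) (F c r i)) ∧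
    ∀ (r₀ : V) (rob : (Fin n → V) → V → V),
      (∀ c r, rob c r = r ∨ G.Adj r (rob c r)) →
      ∃ t, (∃ i, (copsRobberSeq init F rob r₀ t).1 i = (copsRobberSeq init F rob r₀ t).2) ∨
           (∃ i, (copsRobberSeq init F rob r₀ (t + 1)).1 i = (copsRobberSeq init F rob r₀ t).2)

/-- The cop number of `G`: the least `n` such that `n` cops can guarantee capture. -/
noncomputable def copNumber {V : Type*} (G : SimpleGraph V) : ℕ :=
  sInf {n | CopWinWith G n}

/-!
Against a robber at `r`, grow greedily from a fixed vertex an induced path of posts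
`p₀, p₁, …`: `p_{j+1}` is a neighbour of `p_j` outside the closed neighbourhoods of the earlier
posts and adjacent to the robber's component of `G` minus the closed neighbourhoods of
`p₀, …, p_j`. Connectivity guarantees that the next post exists, and a robber who avoids the
closed neighbourhoods of the manned posts stays in that component, so the manned posts do not
change; this is what lets the cops, who only see the current positions, recompute the posts from
the robber's position in every round. The `k - 1` cops advance along the posts until they man `p₀, …, p_{k-2}`, the last cop
moves on to `p_{k-1}`, and then the cop on `p_{k-3}` steps up to `p_{k-2}`. An induced `P_k` in a
`(P₁ + P_k)`-free graph dominates every vertex; so a robber who is still free must now be adjacent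
to `p_{k-3}`, and `p₀, …, p_{k-3}` followed by his last two positions is an induced `P_k` that
misses the closed neighbourhood of the last cop, a contradiction.
-/

namespace SimpleGraph

variable {V : Type*} (G : SimpleGraph V)

def Dominates (u x : V) : Prop := x = u ∨ G.Adj u x

def avoiding (B : Set V) : SimpleGraph V where
  Adj x y := G.Adj x y ∧ x ∉ B ∧ y ∉ B
  symm := ⟨fun _ _ h => ⟨h.1.symm, h.2.2, h.2.1⟩⟩
  loopless := ⟨fun _ h => G.irrefl h.1⟩

def IsInducedPath (p : ℕ → V) (k : ℕ) : Prop :=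
  (∀ i, i + 1 < k → G.Adj (p i) (p (i + 1))) ∧
    ∀ i j, i + 1 < j → j < k → ¬ G.Dominates (p i) (p j)

variable {G}

lemma Dominates.symm {u x : V} (h : G.Dominates u x) : G.Dominates x u :=
  h.imp Eq.symm Adj.symm

lemma Adj.dominates {u x : V} (h : G.Adj u x) : G.Dominates u x := Or.inr h

lemma dominates_update {n : ℕ} {c : Fin n → V} {j : Fin n} {x : V} (h : G.Dominates (c j) x)
    (i : Fin n) : G.Dominates (c i) (Function.update c j x i) := by
  rcases eq_or_ne i j with rfl | hij
  · rwa [Function.update_self]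
  · rw [Function.update_of_ne hij]
    exact Or.inl rfl

lemma avoiding_anti {B B' : Set V} (h : B ⊆ B') : G.avoiding B' ≤ G.avoiding B :=
  fun _ _ hxy => ⟨hxy.1, fun hx => hxy.2.1 (h hx), fun hy => hxy.2.2 (h hy)⟩

lemma notMem_of_reachable_avoiding {B : Set V} {r v : V} (hr : r ∉ B)
    (h : (G.avoiding B).Reachable r v) : v ∉ B := by
  rw [reachable_iff_reflTransGen] at h
  rcases h.cases_tail with rfl | ⟨_, _, hwv⟩
  exacts [hr, hwv.2.2]

namespace IsInducedPath

variable {p : ℕ → V} {k : ℕ}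

lemma injOn (hp : G.IsInducedPath p k) {i j : ℕ} (hi : i < k) (hj : j < k) (hij : p i = p j) :
    i = j := by
  rcases lt_trichotomy i j with h | rfl | h
  · rcases (Nat.succ_le_of_lt h).lt_or_eq with h' | rfl
    · exact absurd (Or.inl hij.symm) (hp.2 i j h' hj)
    · exact absurd hij (hp.1 i hj).ne
  · rfl
  · rcases (Nat.succ_le_of_lt h).lt_or_eq with h' | rfl
    · exact absurd (Or.inl hij) (hp.2 j i h' hi)
    · exact absurd hij.symm (hp.1 j hi).ne

lemma adj_iff (hp : G.IsInducedPath p k) {i j : ℕ} (hi : i < k) (hj : j < k) :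
    G.Adj (p i) (p j) ↔ i + 1 = j ∨ j + 1 = i := by
  refine ⟨fun hadj => ?_, ?_⟩
  · by_contra! hne
    rcases lt_trichotomy i j with h | rfl | h
    · exact hp.2 i j (by omega) hj hadj.dominates
    · exact hadj.ne rfl
    · exact hp.2 j i (by omega) hi hadj.symm.dominates
  · rintro (rfl | rfl)
    exacts [hp.1 i hj, (hp.1 j hi).symm]

lemma update (hp : G.IsInducedPath p (k + 1)) {x : V} (hadj : G.Adj (p k) x)
    (hx : ∀ i < k, ¬ G.Dominates (p i) x) :
    G.IsInducedPath (Function.update p (k + 1) x) (k + 2) := by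
  constructor
  · intro i hi
    rw [Function.update_of_ne (by omega)]
    rcases (Nat.lt_succ_iff.mp hi).lt_or_eq with h | h
    · rw [Function.update_of_ne (by omega)]
      exact hp.1 i h
    · obtain rfl : i = k := by omega
      rwa [Function.update_self]
  · intro i j hij hj
    rw [Function.update_of_ne (by omega)]
    rcases (Nat.lt_succ_iff.mp hj).lt_or_eq with h | rfl
    · rw [Function.update_of_ne (by omega)]
      exact hp.2 i j hij h
    · rw [Function.update_self]
      exact hx i (by omega)

lemma exists_dominates (hfree : IsEmpty ((pathGraph 1 ⊕g pathGraph k) ↪g G))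
    (hp : G.IsInducedPath p k) (z : V) : ∃ i < k, G.Dominates (p i) z := by
  by_contra! hz
  have hzp (i : Fin k) : z ≠ p i := fun h => hz i i.2 (Or.inl h)
  have hzp' (i : Fin k) : ¬ G.Adj z (p i) := fun h => hz i i.2 h.symm.dominates
  refine hfree.false ⟨⟨Sum.elim (fun _ => z) (fun i => p i), ?_⟩, ?_⟩
  · rintro (a | a) (b | b) hab
    · exact congrArg Sum.inl (Subsingleton.elim a b)
    · exact absurd hab (hzp b)
    · exact absurd hab.symm (hzp a)
    · exact congrArg Sum.inr (Fin.ext (hp.injOn a.2 b.2 hab))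
  · rintro (a | a) (b | b)
    · simp [Subsingleton.elim a b]
    · exact iff_of_false (hzp' b) (by simp)
    · exact iff_of_false (fun h => hzp' a h.symm) (by simp)
    · exact (hp.adj_iff a.2 b.2).trans (by simp [pathGraph_adj])

end IsInducedPath

end SimpleGraph

namespace CopsAndRobber

variable {V : Type*} (G : SimpleGraph V)

def Threatened {n : ℕ} (c : Fin n → V) (r : V) : Prop := ∃ i, G.Dominates (c i) r

theorem copWinWith_of_rankedInvariant {n : ℕ} (init : Fin n → V)
    (F : (Fin n → V) → V → Fin n → V) (hF : ∀ c r i, G.Dominates (c i) (F c r i))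
    (Inv : ℕ → (Fin n → V) → V → Prop)
    (hcatch : ∀ c r, Threatened G c r → ∃ i, F c r i = r)
    (hstep : ∀ m c r r', Inv m c r → ¬ Threatened G c r → G.Dominates r r' →
      Threatened G (F c r) r' ∨ ∃ m' < m, Inv m' (F c r) r')
    (hinit : ∀ r, ∃ m, Inv m init r) :
    CopWinWith G n := by
  refine ⟨init, F, hF, fun r₀ rob hrob => ?_⟩
  set play := copsRobberSeq init F rob r₀
  have catch_of_threatened (t : ℕ) (ht : Threatened G (play t).1 (play t).2) :
      ∃ t, (∃ i, (play t).1 i = (play t).2) ∨ ∃ i, (play (t + 1)).1 i = (play t).2 :=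
    ⟨t, Or.inr (hcatch _ _ ht)⟩
  have capture_of_inv (m : ℕ) : ∀ t, Inv m (play t).1 (play t).2 →
      ∃ t, (∃ i, (play t).1 i = (play t).2) ∨ ∃ i, (play (t + 1)).1 i = (play t).2 := by
    induction m using Nat.strong_induction_on with
    | _ m ih =>
      intro t hinv
      by_cases ht : Threatened G (play t).1 (play t).2
      · exact catch_of_threatened t ht
      rcases hstep m _ _ _ hinv ht (hrob _ _) with ht' | ⟨m', hm', hinv'⟩
      · exact catch_of_threatened (t + 1) ht'
      · exact ih m' hm' (t + 1) hinv'
  obtain ⟨m, hm⟩ := hinit r₀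
  exact capture_of_inv m 0 hm

def door (B : Set V) (u r : V) : Set V :=
  {x | G.Adj u x ∧ x ∉ B ∧
    ∃ t, (G.avoiding (B ∪ {y | G.Dominates u y})).Reachable r t ∧ G.Adj x t}

variable {G} in
lemma door_congr {B : Set V} {u r r' : V}
    (h : (G.avoiding (B ∪ {y | G.Dominates u y})).Reachable r r') :
    door G B u r = door G B u r' := by
  ext x
  simp only [door, Set.mem_ofPred_eq]
  exact and_congr_right' <| and_congr_right' <| exists_congr fun t =>
    and_congr_left' ⟨h.symm.trans, h.trans⟩

section Posts

variable [Nonempty V]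

/-- `trail G r j = (N[p₀] ∪ ⋯ ∪ N[p_{j-1}], p_j)`, where `p` are the posts against a robber
at `r` and `N[·]` denotes closed neighbourhoods. -/
noncomputable def trail (r : V) : ℕ → Set V × V
  | 0 => (∅, Classical.arbitrary V)
  | j + 1 => ((trail r j).1 ∪ {y | G.Dominates (trail r j).2 y},
      Classical.epsilon (· ∈ door G (trail r j).1 (trail r j).2 r))

noncomputable def post (r : V) (j : ℕ) : V := (trail G r j).2

noncomputable def guarded (r : V) (j : ℕ) : Set V := (trail G r j).1

variable {G}

lemma guarded_succ (r : V) (j : ℕ) :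
    guarded G r (j + 1) = guarded G r j ∪ {y | G.Dominates (post G r j) y} := rfl

lemma mem_guarded {r x : V} {j : ℕ} :
    x ∈ guarded G r j ↔ ∃ i < j, G.Dominates (post G r i) x := by
  induction j with
  | zero => simp [guarded, trail]
  | succ j ih =>
    rw [guarded_succ, Set.mem_union, ih, Set.mem_ofPred_eq]
    constructor
    · rintro (⟨i, hi, hx⟩ | hx)
      exacts [⟨i, by omega, hx⟩, ⟨j, by omega, hx⟩]
    · rintro ⟨i, hi, hx⟩
      rcases (Nat.lt_succ_iff.mp hi).lt_or_eq with hi | rfl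
      exacts [Or.inl ⟨i, hi, hx⟩, Or.inr hx]

lemma guarded_mono (r : V) : Monotone (guarded G r) := fun _ _ hij _ hx =>
  let ⟨i, hi, hx⟩ := mem_guarded.mp hx
  mem_guarded.mpr ⟨i, by omega, hx⟩

lemma door_nonempty {r v : V} {j : ℕ} (hr : r ∉ guarded G r (j + 1))
    (hv : G.Dominates (post G r j) v) (hrv : (G.avoiding (guarded G r j)).Reachable r v) :
    (door G (guarded G r j) (post G r j) r).Nonempty := by
  set R := {y | (G.avoiding (guarded G r (j + 1))).Reachable r y}
  have hvR : v ∉ R := fun h =>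
    notMem_of_reachable_avoiding hr h (by rw [guarded_succ]; exact Or.inr hv)
  obtain ⟨⟨⟨t, x⟩, htx⟩, -, htR, hxR⟩ :=
    hrv.some.exists_boundary_dart R (Reachable.refl r) hvR
  have ht : t ∉ guarded G r (j + 1) := notMem_of_reachable_avoiding hr htR
  have hx : x ∈ guarded G r (j + 1) := by
    by_contra hx
    exact hxR (htR.trans (Adj.reachable ⟨htx.1, ht, hx⟩))
  rw [guarded_succ] at ht hx
  have hx' : G.Dominates (post G r j) x := hx.resolve_left htx.2.2
  refine ⟨x, ?_, htx.2.2, t, htR, htx.1.symm⟩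
  rcases hx' with rfl | hx'
  · exact absurd (Or.inr (Or.inr htx.1.symm)) ht
  · exact hx'

lemma post_succ_mem_door (hconn : G.Connected) {r : V} :
    ∀ {j : ℕ}, r ∉ guarded G r (j + 1) →
      post G r (j + 1) ∈ door G (guarded G r j) (post G r j) r
  | 0, hr => Classical.epsilon_spec <| door_nonempty hr (Or.inl rfl) <|
      (hconn.preconnected r _).mono fun _ _ (h : G.Adj _ _) =>
        (⟨h, id, id⟩ : (G.avoiding ∅).Adj _ _)
  | j + 1, hr => by
    have hr' : r ∉ guarded G r (j + 1) := fun h => hr (guarded_mono r (by omega) h)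
    obtain ⟨-, -, t, ht, hxt⟩ := post_succ_mem_door hconn hr'
    exact Classical.epsilon_spec (door_nonempty hr hxt.dominates ht)

lemma adj_post_succ (hconn : G.Connected) {r : V} {j : ℕ} (hr : r ∉ guarded G r (j + 1)) :
    G.Adj (post G r j) (post G r (j + 1)) :=
  (post_succ_mem_door hconn hr).1

lemma post_succ_notMem_guarded (hconn : G.Connected) {r : V} {j : ℕ}
    (hr : r ∉ guarded G r (j + 1)) : post G r (j + 1) ∉ guarded G r j :=
  (post_succ_mem_door hconn hr).2.1

lemma isInducedPath_post (hconn : G.Connected) {r : V} {J : ℕ} (hr : r ∉ guarded G r J) :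
    G.IsInducedPath (post G r) (J + 1) := by
  have hr' {j : ℕ} (hj : j ≤ J) : r ∉ guarded G r j := fun h => hr (guarded_mono r hj h)
  refine ⟨fun i hi => adj_post_succ hconn (hr' (by omega)), fun i j hij hj hdom => ?_⟩
  obtain ⟨j, rfl⟩ : ∃ j', j = j' + 1 := ⟨j - 1, by omega⟩
  exact post_succ_notMem_guarded hconn (hr' (by omega)) (mem_guarded.mpr ⟨i, by omega, hdom⟩)

lemma trail_eq_of_reachable {r r' : V} {J : ℕ}
    (h : (G.avoiding (guarded G r J)).Reachable r r') : ∀ i ≤ J, trail G r' i = trail G r i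
  | 0, _ => rfl
  | i + 1, hi => by
    have ih := trail_eq_of_reachable h i (by omega)
    have h' := h.mono (avoiding_anti (guarded_mono r hi))
    simp only [trail, ih]
    rw [door_congr h']

lemma notMem_guarded_of_not_threatened {n : ℕ} {c : Fin n → V} {r x : V} {J : ℕ}
    (hcov : ∀ j < J, ∃ i, c i = post G r j) (hx : ¬ Threatened G c x) : x ∉ guarded G r J :=
  fun h =>
    let ⟨j, hj, hdom⟩ := mem_guarded.mp h
    let ⟨i, hi⟩ := hcov j hj
    hx ⟨i, hi ▸ hdom⟩

end Posts

section Strategy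

variable [Nonempty V] (N : ℕ)

def target (i : Fin (N + 2)) : ℕ := if (i : ℕ) ≤ N then i else N + 2

noncomputable def formation (r : V) (t : ℕ) (i : Fin (N + 2)) : V :=
  post G r (min (target N i) t)

def Advancing (t : ℕ) (c : Fin (N + 2) → V) (r : V) : Prop :=
  t ≤ N + 1 ∧ c = formation G N r t

/-- The last cop extends the induced path of posts `0, …, N + 1` by one vertex. -/
def Endgame (c : Fin (N + 2) → V) (r : V) : Prop :=
  (∀ i : Fin (N + 2), (i : ℕ) ≤ N → c i = post G r i) ∧
    G.Adj (post G r (N + 1)) (c (Fin.last _)) ∧ c (Fin.last _) ∉ guarded G r (N + 1)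

open Classical in
noncomputable def strategy (c : Fin (N + 2) → V) (r : V) : Fin (N + 2) → V :=
  if h : Threatened G c r then Function.update c h.choose r
  else if Endgame G N c r then Function.update c ⟨N, by omega⟩ (post G r (N + 1))
  else if h : ∃ t, Advancing G N t c r then formation G N r (h.choose + 1)
  else c

def Stage (m : ℕ) (c : Fin (N + 2) → V) (r : V) : Prop :=
  Endgame G N c r ∧ m = 0 ∨ ∃ t, Advancing G N t c r ∧ m = N + 2 - t

variable {G N}

lemma formation_of_le {r : V} {t : ℕ} {i : Fin (N + 2)} (hiN : (i : ℕ) ≤ N)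
    (hit : (i : ℕ) ≤ t) :
    formation G N r t i = post G r i := by
  simp [formation, target, hiN, hit]

lemma formation_last {r : V} {t : ℕ} (ht : t ≤ N + 2) :
    formation G N r t (Fin.last _) = post G r t := by
  simp [formation, target, ht]

lemma Advancing.notMem_guarded {t : ℕ} {c : Fin (N + 2) → V} {r x : V}
    (h : Advancing G N t c r) (hx : ¬ Threatened G c x) : x ∉ guarded G r (t + 1) := by
  obtain ⟨ht, rfl⟩ := h
  refine notMem_guarded_of_not_threatened (fun j hj => ?_) hx
  rcases Nat.lt_or_ge j (N + 1) with hj' | hj'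
  · exact ⟨⟨j, by omega⟩, formation_of_le (by simp; omega) (by simp; omega)⟩
  · exact ⟨Fin.last _, by rw [formation_last (by omega)]; congr 1; omega⟩

lemma Endgame.notMem_guarded {c : Fin (N + 2) → V} {r x : V} (h : Endgame G N c r)
    (hx : ¬ Threatened G c x) : x ∉ guarded G r (N + 1) :=
  notMem_guarded_of_not_threatened (fun j hj => ⟨⟨j, by omega⟩, h.1 _ (by simp; omega)⟩) hx

lemma dominates_formation_succ (hconn : G.Connected) {r : V} {t : ℕ}
    (hr : r ∉ guarded G r (t + 1)) (i : Fin (N + 2)) :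
    G.Dominates (formation G N r t i) (formation G N r (t + 1) i) := by
  unfold formation
  rcases le_or_gt (target N i) t with h | h
  · rw [min_eq_left h, min_eq_left (by omega)]
    exact Or.inl rfl
  · rw [min_eq_right h.le, min_eq_right h]
    exact (adj_post_succ hconn hr).dominates

lemma Advancing.unique (hconn : G.Connected) {t t' : ℕ} {c : Fin (N + 2) → V} {r : V}
    (h : Advancing G N t c r) (h' : Advancing G N t' c r) (hc : ¬ Threatened G c r) :
    t = t' := by
  have hlast : post G r t = post G r t' := by
    rw [← formation_last (N := N) (by have := h.1; omega),
      ← formation_last (N := N) (by have := h'.1; omega), ← h.2, ← h'.2]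
  have hr := h.notMem_guarded hc
  have hr' := h'.notMem_guarded hc
  rcases le_total t t' with htt | htt
  · exact (isInducedPath_post hconn hr').injOn (by omega) (by omega) hlast
  · exact ((isInducedPath_post hconn hr).injOn (by omega) (by omega) hlast.symm).symm

lemma exists_strategy_eq_of_threatened {c : Fin (N + 2) → V} {r : V}
    (h : Threatened G c r) : ∃ i, strategy G N c r i = r :=
  ⟨h.choose, by rw [strategy, dif_pos h, Function.update_self]⟩

lemma strategy_of_endgame {c : Fin (N + 2) → V} {r : V} (hc : ¬ Threatened G c r)
    (h : Endgame G N c r) :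
    strategy G N c r = Function.update c ⟨N, by omega⟩ (post G r (N + 1)) := by
  rw [strategy, dif_neg hc, if_pos h]

lemma strategy_of_advancing (hconn : G.Connected) {t : ℕ} {c : Fin (N + 2) → V} {r : V}
    (hc : ¬ Threatened G c r) (he : ¬ Endgame G N c r) (h : Advancing G N t c r) :
    strategy G N c r = formation G N r (t + 1) := by
  have hex : ∃ t, Advancing G N t c r := ⟨t, h⟩
  rw [strategy, dif_neg hc, if_neg he, dif_pos hex, hex.choose_spec.unique hconn h hc]

lemma dominates_strategy (hconn : G.Connected) (c : Fin (N + 2) → V) (r : V)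
    (i : Fin (N + 2)) :
    G.Dominates (c i) (strategy G N c r i) := by
  unfold strategy
  split_ifs with hc he ha
  · exact dominates_update hc.choose_spec i
  · refine dominates_update ?_ i
    rw [he.1 _ le_rfl]
    exact (adj_post_succ hconn (he.notMem_guarded hc)).dominates
  · have h := dominates_formation_succ hconn (ha.choose_spec.notMem_guarded hc) i
    rwa [← ha.choose_spec.2] at h
  · exact Or.inl rfl

lemma Endgame.adj_post (hconn : G.Connected)
    (hfree : IsEmpty ((pathGraph 1 ⊕g pathGraph (N + 3)) ↪g G)) {c : Fin (N + 2) → V}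
    {r x : V} (h : Endgame G N c r) (hc : ¬ Threatened G c r)
    (hfar : ∀ i < N, ¬ G.Dominates (post G r i) x) (hN : ¬ G.Dominates (post G r (N + 1)) x)
    (hδ : ¬ G.Dominates (c (Fin.last _)) x) : G.Adj (post G r N) x := by
  have hr : r ∉ guarded G r (N + 1) := h.notMem_guarded hc
  obtain ⟨i, hi, hd⟩ := ((isInducedPath_post hconn hr).update h.2.1
    fun i hi hd => h.2.2 (mem_guarded.mpr ⟨i, hi, hd⟩)).exists_dominates hfree x
  rcases (by omega : i < N ∨ i = N ∨ i = N + 1 ∨ i = N + 2) with hi | rfl | rfl | rfl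
  · rw [Function.update_of_ne (by omega)] at hd
    exact absurd hd (hfar i hi)
  · rw [Function.update_of_ne (by omega)] at hd
    rcases hd with rfl | hd
    exacts [absurd (adj_post_succ hconn hr).symm.dominates hN, hd]
  · rw [Function.update_of_ne (by omega)] at hd
    exact absurd hd hN
  · rw [Function.update_self] at hd
    exact absurd hd hδ

lemma threatened_strategy_of_endgame (hconn : G.Connected)
    (hfree : IsEmpty ((pathGraph 1 ⊕g pathGraph (N + 3)) ↪g G)) {c : Fin (N + 2) → V}
    {r r' : V} (h : Endgame G N c r) (hc : ¬ Threatened G c r) (hr' : G.Dominates r r') :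
    Threatened G (strategy G N c r) r' := by
  rw [strategy_of_endgame hc h]
  by_contra hc'
  have hr : r ∉ guarded G r (N + 1) := h.notMem_guarded hc
  have hfar (i : ℕ) (hi : i < N) : ¬ G.Dominates (post G r i) r' := fun hd =>
    hc' ⟨⟨i, by omega⟩, by
      rwa [Function.update_of_ne (by simp [Fin.ext_iff]; omega), h.1 _ (by simp; omega)]⟩
  have hδr' : ¬ G.Dominates (c (Fin.last _)) r' := fun hd =>
    hc' ⟨Fin.last _, by rwa [Function.update_of_ne (by simp [Fin.ext_iff])]⟩
  have hNr' : G.Adj (post G r N) r' := h.adj_post hconn hfree hc hfar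
    (fun hd => hc' ⟨⟨N, by omega⟩, by rwa [Function.update_self]⟩) hδr'
  have hr'r : G.Adj r' r := by
    rcases hr' with rfl | hr'
    exacts [absurd (mem_guarded.mpr ⟨N, by omega, hNr'.dominates⟩) hr, hr'.symm]
  have hpath := ((isInducedPath_post hconn fun h => hr (guarded_mono r N.le_succ h)).update
    hNr' hfar).update (by rwa [Function.update_self]) fun i hi => by
      rw [Function.update_of_ne (by omega)]
      exact fun hd => hr (mem_guarded.mpr ⟨i, hi, hd⟩)
  obtain ⟨i, hi, hd⟩ := hpath.exists_dominates hfree (c (Fin.last _))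
  rcases (by omega : i ≤ N ∨ i = N + 1 ∨ i = N + 2) with hi | rfl | rfl
  · rw [Function.update_of_ne (by omega), Function.update_of_ne (by omega)] at hd
    exact h.2.2 (mem_guarded.mpr ⟨i, by omega, hd⟩)
  · rw [Function.update_of_ne (by omega), Function.update_self] at hd
    exact hδr' hd.symm
  · rw [Function.update_self] at hd
    exact hc ⟨Fin.last _, hd.symm⟩

lemma advancing_or_endgame_strategy (hconn : G.Connected) {t : ℕ} {c : Fin (N + 2) → V}
    {r r' : V} (h : Advancing G N t c r) (hc : ¬ Threatened G c r) (he : ¬ Endgame G N c r)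
    (hr' : G.Dominates r r') (hc' : ¬ Threatened G (strategy G N c r) r') :
    Advancing G N (t + 1) (strategy G N c r) r' ∨ Endgame G N (strategy G N c r) r' := by
  rw [strategy_of_advancing hconn hc he h] at hc' ⊢
  have hr := h.notMem_guarded hc
  have hreach {J : ℕ} (hJ : J ≤ t + 1) (hr'J : r' ∉ guarded G r J) :
      (G.avoiding (guarded G r J)).Reachable r r' := by
    rcases hr' with rfl | hadj
    · rfl
    · exact Adj.reachable ⟨hadj, fun h' => hr (guarded_mono r hJ h'), hr'J⟩
  rcases h.1.lt_or_eq with ht | rfl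
  · have hr'g : r' ∉ guarded G r (t + 1) := fun hg =>
      (Advancing.notMem_guarded ⟨ht, rfl⟩ hc') (guarded_mono r (t + 1).le_succ hg)
    refine Or.inl ⟨ht, funext fun i => ?_⟩
    exact congrArg Prod.snd (trail_eq_of_reachable (hreach le_rfl hr'g) _ (by omega)) |>.symm
  · have hr'g : r' ∉ guarded G r (N + 1) := notMem_guarded_of_not_threatened
      (fun j hj => ⟨⟨j, by omega⟩, formation_of_le (by simp; omega) (by simp; omega)⟩) hc'
    have htrail := trail_eq_of_reachable (hreach (by omega) hr'g)
    have hpost (i : ℕ) (hi : i ≤ N + 1) : post G r' i = post G r i :=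
      congrArg Prod.snd (htrail i hi)
    refine Or.inr ⟨fun i hi => ?_, ?_, ?_⟩
    · rw [formation_of_le hi (by omega), hpost _ (by omega)]
    · rw [formation_last le_rfl, hpost _ le_rfl]
      exact adj_post_succ hconn hr
    · rw [formation_last le_rfl, guarded, htrail _ le_rfl]
      exact post_succ_notMem_guarded hconn hr

lemma strategy_step (hconn : G.Connected)
    (hfree : IsEmpty ((pathGraph 1 ⊕g pathGraph (N + 3)) ↪g G)) (m : ℕ) (c : Fin (N + 2) → V)
    (r r' : V) (h : Stage G N m c r) (hc : ¬ Threatened G c r) (hr' : G.Dominates r r') :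
    Threatened G (strategy G N c r) r' ∨ ∃ m' < m, Stage G N m' (strategy G N c r) r' := by
  by_cases he : Endgame G N c r
  · exact Or.inl (threatened_strategy_of_endgame hconn hfree he hc hr')
  rcases h with ⟨he', -⟩ | ⟨t, ha, rfl⟩
  · exact absurd he' he
  by_cases hc' : Threatened G (strategy G N c r) r'
  · exact Or.inl hc'
  have ht := ha.1
  rcases advancing_or_endgame_strategy hconn ha hc he hr' hc' with ha' | he'
  · exact Or.inr ⟨N + 2 - (t + 1), by omega, Or.inr ⟨t + 1, ha', rfl⟩⟩
  · exact Or.inr ⟨0, by omega, Or.inl ⟨he', rfl⟩⟩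

lemma stage_start (r : V) : Stage G N (N + 2) (fun _ => Classical.arbitrary V) r :=
  Or.inr ⟨0, ⟨by omega, funext fun _ => by simp [formation, post, trail]⟩, rfl⟩

lemma copWinWith_of_free (hconn : G.Connected)
    (hfree : IsEmpty ((pathGraph 1 ⊕g pathGraph (N + 3)) ↪g G)) : CopWinWith G (N + 2) :=
  copWinWith_of_rankedInvariant G _ _ (dominates_strategy hconn) _
    (fun _ _ => exists_strategy_eq_of_threatened) (strategy_step hconn hfree)
    fun r => ⟨_, stage_start r⟩

end Strategy

end CopsAndRobber

theorem cop_number_of_P1_Pk_free_general {V : Type*} (G : SimpleGraph V) (k : ℕ)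
    (hk : 3 ≤ k) (hconn : G.Connected)
    (hfree : IsEmpty ((pathGraph 1 ⊕g pathGraph k) ↪g G)) :
    copNumber G ≤ k - 1 := by
  obtain ⟨N, rfl⟩ : ∃ N, k = N + 3 := ⟨k - 3, by omega⟩
  have : Nonempty V := hconn.nonempty
  exact Nat.sInf_le (CopsAndRobber.copWinWith_of_free hconn hfree)

theorem cop_number_of_P1_Pk_free {V : Type*} [Fintype V] (G : SimpleGraph V) (k : ℕ)
    (hk : 3 ≤ k) (hconn : G.Connected)
    (hfree : IsEmpty ((pathGraph 1 ⊕g pathGraph k) ↪g G)) :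
    copNumber G ≤ k - 1 :=
  cop_number_of_P1_Pk_free_general G k hk hconn hfree
end

section
/- A 2P_2-free graph with diameter 3 has cop number at most 2. -/
open SimpleGraph

/-!
Take `x, y` at distance `3` and a neighbour `b` of `y`. Freeness of `2P₂` forces `b` to dominate
`N(x)`, and if `a ∈ N(x)` maximises `|N[a] ∪ N[b]|`, it also forces every vertex outside
`N[a] ∪ N[b]` to have all its neighbours in `N[a]`. A cop parked on `a` therefore captures the
robber as soon as he moves out of a vertex outside `N[a] ∪ N[b]`, so he must stand still, and a
second cop starting from `b` walks to him along a shortest path. Closed neighbourhoods `N[v]` are the balls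
`G.ball v 2`.
-/

lemma Set.exists_mem_notMem_of_ncard_union_le {α : Type*} [Finite α] {A B C : Set α} {s : α}
    (hcard : (C ∪ B).ncard ≤ (A ∪ B).ncard) (hsC : s ∈ C) (hs : s ∉ A ∪ B) :
    ∃ l ∈ A, l ∉ C ∪ B := by
  refine Set.not_subset.1 fun hsub => hcard.not_gt (Set.ncard_lt_ncard ?_)
  exact (Set.ssubset_iff_of_subset (Set.union_subset hsub Set.subset_union_right)).2
    ⟨s, .inl hsC, hs⟩

namespace SimpleGraph

variable {V : Type*} {G : SimpleGraph V}

lemma mem_ball_two {u v : V} : u ∈ G.ball v 2 ↔ u = v ∨ G.Adj v u := by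
  simp

lemma Adj.mem_ball_two {u v : V} (h : G.Adj v u) : u ∈ G.ball v 2 := by
  simp [h]

lemma mem_ball_two_of_twoP2Free (h2P2 : IsEmpty ((pathGraph 2 ⊕g pathGraph 2) ↪g G))
    {u v w z : V} (huv : G.Adj u v) (hwz : G.Adj w z) (hwu : w ∉ G.ball u 2)
    (hzu : z ∉ G.ball u 2) (hwv : w ∉ G.ball v 2) : z ∈ G.ball v 2 := by
  by_contra hzv
  simp only [mem_ball_two, not_or] at hwu hzu hwv hzv
  let f : Fin 2 ⊕ Fin 2 → V := Sum.elim ![u, v] ![w, z]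
  refine h2P2.false ⟨⟨f, ?_⟩, fun {i j} => (?_ : G.Adj (f i) (f j) ↔ _)⟩
  · rintro (i | i) (j | j) hij <;> fin_cases i <;> fin_cases j <;> simp_all [f, huv.ne, hwz.ne]
  · rcases i with i | i <;> rcases j with j | j <;> fin_cases i <;> fin_cases j <;>
      simp_all [f, pathGraph_adj, G.adj_comm]

lemma exists_adj_dist_lt_of_dist_ne_zero {u v : V} (h : G.dist u v ≠ 0) :
    ∃ w, G.Adj u w ∧ G.dist w v < G.dist u v := by
  obtain ⟨p, hp⟩ := exists_walk_of_dist_ne_zero h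
  cases p with
  | nil => exact absurd hp.symm h
  | cons hadj q =>
    refine ⟨_, hadj, (dist_le q).trans_lt ?_⟩
    rw [← hp, Walk.length_cons]
    omega

lemma notMem_ball_two_of_three_le_dist {x y u : V} (hxy : 3 ≤ G.dist x y)
    (hu : u ∈ G.ball x 2) : y ∉ G.ball u 2 := by
  intro hy
  have : G.dist x y ≤ 2 := by
    rcases mem_ball_two.1 hu with rfl | hxu <;> rcases mem_ball_two.1 hy with rfl | huy
    · simp
    · simp [dist_eq_one_iff_adj.2 huy]
    · simp [dist_eq_one_iff_adj.2 hxu]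
    · exact dist_le (.cons hxu (.cons huy .nil))
  omega

lemma adj_of_twoP2Free_of_three_le_dist (h2P2 : IsEmpty ((pathGraph 2 ⊕g pathGraph 2) ↪g G))
    {x y b c : V} (hxy : 3 ≤ G.dist x y) (hyb : G.Adj y b) (hxc : G.Adj x c) : G.Adj b c := by
  have hyx : x ∉ G.ball y 2 :=
    mem_ball_comm.not.1 (notMem_ball_two_of_three_le_dist hxy (G.mem_ball_self (by norm_num)))
  have hbx : x ∉ G.ball b 2 :=
    notMem_ball_two_of_three_le_dist (G.dist_comm ▸ hxy) hyb.mem_ball_two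
  have hcy : y ∉ G.ball c 2 := notMem_ball_two_of_three_le_dist hxy hxc.mem_ball_two
  rcases mem_ball_two.1 (mem_ball_two_of_twoP2Free h2P2 hyb hxc hyx (mem_ball_comm.not.1 hcy) hbx)
    with rfl | hbc
  · exact absurd (mem_ball_comm.1 hyb.mem_ball_two) hcy
  · exact hbc

lemma not_adj_of_twoP2Free_of_three_le_dist (h2P2 : IsEmpty ((pathGraph 2 ⊕g pathGraph 2) ↪g G))
    {x y v t : V} (hxy : 3 ≤ G.dist x y) (hxv : G.Adj x v) (htx : t ∉ G.ball x 2)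
    (htv : t ∉ G.ball v 2) : ¬ G.Adj y t := fun hyt =>
  htv (mem_ball_two_of_twoP2Free h2P2 hxv hyt
    (notMem_ball_two_of_three_le_dist hxy (G.mem_ball_self (by norm_num)))
    htx (notMem_ball_two_of_three_le_dist hxy hxv.mem_ball_two))

lemma neighborSet_subset_ball_two_of_twoP2Free [Finite V]
    (h2P2 : IsEmpty ((pathGraph 2 ⊕g pathGraph 2) ↪g G)) {x y a b s : V} (hxy : 3 ≤ G.dist x y)
    (hyb : G.Adj y b) (hxa : G.Adj x a)
    (hmax : ∀ w, G.Adj x w → (G.ball w 2 ∪ G.ball b 2).ncard ≤ (G.ball a 2 ∪ G.ball b 2).ncard)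
    (hs : s ∉ G.ball a 2 ∪ G.ball b 2) : G.neighborSet s ⊆ G.ball a 2 := by
  have hdom : ∀ c, G.Adj x c → G.Adj b c :=
    fun _ => adj_of_twoP2Free_of_three_le_dist h2P2 hxy hyb
  obtain ⟨hsa, hsb⟩ := not_or.1 hs
  have hsx : s ∉ G.ball x 2 := by
    rw [mem_ball_two]
    rintro (rfl | hxs)
    · exact hsa hxa.symm.mem_ball_two
    · exact hsb (hdom s hxs).mem_ball_two
  intro w hsw
  by_contra hwa
  have hxw : G.Adj x w := by
    rcases mem_ball_two.1 (mem_ball_two_of_twoP2Free h2P2 hxa.symm hsw hsa hwa hsx) with rfl | h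
    · exact (hsx hsw.symm.mem_ball_two).elim
    · exact h
  obtain ⟨l, hla, hl⟩ :=
    Set.exists_mem_notMem_of_ncard_union_le (hmax w hxw) hsw.symm.mem_ball_two hs
  obtain ⟨hlw, hlb⟩ := not_or.1 hl
  have hal : G.Adj a l := (mem_ball_two.1 hla).resolve_left fun hla =>
    hlb (hla ▸ (hdom a hxa).mem_ball_two)
  have hls : G.Adj l s := by
    rcases mem_ball_two.1 (mem_ball_two_of_twoP2Free h2P2 hal hsw.symm hwa hsa
      (mem_ball_comm.not.1 hlw)) with rfl | hls
    · exact (hsa hla).elim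
    · exact hls
  have hlx : l ∉ G.ball x 2 := by
    rw [mem_ball_two]
    rintro (rfl | hxl)
    · exact hlw hxw.symm.mem_ball_two
    · exact hlb (hdom l hxl).mem_ball_two
  have hly : l ∉ G.ball y 2 := by
    rw [mem_ball_two]
    rintro (rfl | hyl)
    · exact notMem_ball_two_of_three_le_dist hxy hxa.mem_ball_two hla
    · exact not_adj_of_twoP2Free_of_three_le_dist h2P2 hxy hxw hlx hlw hyl
  rcases mem_ball_two.1 (mem_ball_two_of_twoP2Free h2P2 hyb.symm hls hlb hsb hly) with rfl | hys
  · exact hsb hyb.symm.mem_ball_two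
  · exact not_adj_of_twoP2Free_of_three_le_dist h2P2 hxy hxa hsx hsa hys

lemma exists_neighborSet_subset_ball_two_of_twoP2Free [Finite V]
    (h2P2 : IsEmpty ((pathGraph 2 ⊕g pathGraph 2) ↪g G)) {x y : V} (hxy : 3 ≤ G.dist x y) :
    ∃ a b : V, ∀ s ∉ G.ball a 2 ∪ G.ball b 2, G.neighborSet s ⊆ G.ball a 2 := by
  have hxy₀ : G.dist x y ≠ 0 := by omega
  obtain ⟨b, hyb, -⟩ := exists_adj_dist_lt_of_dist_ne_zero (G.dist_comm ▸ hxy₀)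
  obtain ⟨a₀, hxa₀, -⟩ := exists_adj_dist_lt_of_dist_ne_zero hxy₀
  obtain ⟨a, hxa, hmax⟩ := (G.neighborSet x).exists_max_image
    (fun w => (G.ball w 2 ∪ G.ball b 2).ncard) (Set.toFinite _) ⟨a₀, hxa₀⟩
  exact ⟨a, b, fun s hs =>
    neighborSet_subset_ball_two_of_twoP2Free h2P2 hxy hyb hxa hmax hs⟩

open Classical in
noncomputable def stepToward (G : SimpleGraph V) (u r : V) : V :=
  if h : ∃ w, G.Adj u w ∧ G.dist w r < G.dist u r then h.choose else u

lemma stepToward_eq_or_adj (u r : V) : G.stepToward u r = u ∨ G.Adj u (G.stepToward u r) := by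
  unfold stepToward
  split
  · next h => exact .inr h.choose_spec.1
  · exact .inl rfl

lemma dist_stepToward_lt {u r : V} (h : G.dist u r ≠ 0) :
    G.dist (G.stepToward u r) r < G.dist u r := by
  have hex := exists_adj_dist_lt_of_dist_ne_zero h
  rw [stepToward, dif_pos hex]
  exact hex.choose_spec.2

lemma Connected.stepToward_eq_of_adj (hconn : G.Connected) {u r : V} (h : G.Adj u r) :
    G.stepToward u r = r := by
  have hlt := dist_stepToward_lt (G := G) (ne_of_eq_of_ne (dist_eq_one_iff_adj.2 h) one_ne_zero)
  rw [dist_eq_one_iff_adj.2 h, Nat.lt_one_iff, hconn.dist_eq_zero_iff] at hlt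
  exact hlt

open Classical in
noncomputable def guardAndChase (G : SimpleGraph V) (c : Fin 2 → V) (r : V) : Fin 2 → V :=
  ![if G.Adj (c 0) r then r else c 0, G.stepToward (c 1) r]

lemma guardAndChase_eq_or_adj (c : Fin 2 → V) (r : V) (i : Fin 2) :
    G.guardAndChase c r i = c i ∨ G.Adj (c i) (G.guardAndChase c r i) := by
  fin_cases i
  · by_cases h : G.Adj (c 0) r <;> simp [guardAndChase, h]
  · simpa [guardAndChase] using stepToward_eq_or_adj (c 1) r

theorem Connected.copWinWith_two (hconn : G.Connected) {a b : V}
    (hpin : ∀ s ∉ G.ball a 2 ∪ G.ball b 2, G.neighborSet s ⊆ G.ball a 2) : CopWinWith G 2 := by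
  refine ⟨![a, b], G.guardAndChase, guardAndChase_eq_or_adj, fun r₀ rob hrob => ?_⟩
  by_contra! hcap
  set S := copsRobberSeq ![a, b] G.guardAndChase rob r₀
  have hS : ∀ t, S (t + 1) =
      (G.guardAndChase (S t).1 (S t).2, rob (G.guardAndChase (S t).1 (S t).2) (S t).2) :=
    fun _ => rfl
  have hguard : ∀ t, (S t).2 ∉ G.ball ((S t).1 0) 2 := by
    intro t hmem
    rcases mem_ball_two.1 hmem with h | h
    · exact (hcap t).1 0 h.symm
    · exact (hcap t).2 0 (by simp [hS, guardAndChase, h])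
  have hchase : ∀ t, (S t).2 ∉ G.ball ((S t).1 1) 2 := by
    intro t hmem
    rcases mem_ball_two.1 hmem with h | h
    · exact (hcap t).1 1 h.symm
    · exact (hcap t).2 1 (by simp [hS, guardAndChase, hconn.stepToward_eq_of_adj h])
  have hr₀ : r₀ ∉ G.ball a 2 ∪ G.ball b 2 := fun h => h.elim (hguard 0) (hchase 0)
  have key : ∀ t, (S t).2 = r₀ ∧ (S t).1 0 = a ∧ G.dist ((S t).1 1) r₀ + t ≤ G.dist b r₀ := by
    intro t
    induction t with
    | zero => simp [S, copsRobberSeq]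
    | succ t ih =>
      obtain ⟨hr, h0, hd⟩ := ih
      have hnadj : ¬ G.Adj a r₀ := fun h => hr₀ (.inl h.mem_ball_two)
      have h0' : (S (t + 1)).1 0 = a := by simp [hS, guardAndChase, hr, h0, hnadj]
      have hd' : G.dist ((S (t + 1)).1 1) r₀ + (t + 1) ≤ G.dist b r₀ := by
        have hlt := dist_stepToward_lt (hconn.dist_eq_zero_iff.not.2 (hr ▸ (hcap t).1 1))
        change G.dist (G.stepToward ((S t).1 1) (S t).2) r₀ + (t + 1) ≤ G.dist b r₀
        rw [hr]
        omega
      refine ⟨?_, h0', hd'⟩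
      rcases hrob (G.guardAndChase (S t).1 (S t).2) (S t).2 with h | h
      · rw [hS, h, hr]
      · exact (hguard (t + 1) (h0' ▸ hpin r₀ hr₀ (hr ▸ h))).elim
  obtain ⟨-, -, hd⟩ := key (G.dist b r₀ + 1)
  omega

end SimpleGraph

theorem cop_number_of_twoP2_free_diam_three {V : Type*} [Fintype V] (G : SimpleGraph V)
    (hconn : G.Connected)
    (h2P2 : IsEmpty ((pathGraph 2 ⊕g pathGraph 2) ↪g G))
    (hdiam : G.diam = 3) :
    copNumber G ≤ 2 := by
  have : Nonempty V := hconn.nonempty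
  obtain ⟨x, y, hxy⟩ := G.exists_dist_eq_diam
  obtain ⟨a, b, hpin⟩ :=
    exists_neighborSet_subset_ball_two_of_twoP2Free h2P2 (hxy.trans hdiam).ge
  exact Nat.sInf_le (hconn.copWinWith_two hpin)
end

section
/- For every integer k ≥ 3, the class of connected graphs with no induced path on k vertices is cop-bounded: there is a constant M (namely M = k − 2) such that every connected P_k-free graph G satisfies c(G) ≤ M. -/
open SimpleGraph

/-!
Suppose that against `m + 1` cops on a connected `P_{m+3}`-free graph the robber could escape
forever. Playing against such a robber, the cops build an induced path `v₀, …, vᵢ` with cop `j`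
standing on `vⱼ`. The robber is then confined to its territory, a component of
`G - N[v₀, …, vᵢ]`, and the free cop `i + 1` walks to a neighbour `w` of `vᵢ` that lies in the
territory of `v₀, …, vᵢ₋₁` and is adjacent to the territory of `v₀, …, vᵢ`; `w` extends the induced
path. Once every cop is a guard, such a `w` and a neighbour of `w` in the robber's territory extend
the path to `m + 3` vertices. Since a finite game without escaping positions is won by the cops,
this contradiction bounds the cop number by `m + 1`.
-/

open Function Set

namespace SimpleGraph

variable {V : Type*} (G : SimpleGraph V)

def undominated (B : Set V) : Set V := {x | ∀ b ∈ B, x ≠ b ∧ ¬ G.Adj b x}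

/-- The vertex set of the component of `G - N[B]` containing `r`; empty when `r ∈ N[B]`. -/
def territory (B : Set V) (r : V) : Set V :=
  {x | ∃ p : G.Walk r x, ∀ y ∈ p.support, y ∈ G.undominated B}

variable {G} {B B' : Set V} {r u x y : V}

theorem undominated_anti : Antitone G.undominated := fun _ _ h _ hx b hb => hx b (h hb)

theorem mem_undominated_insert :
    x ∈ G.undominated (insert u B) ↔ (x ≠ u ∧ ¬ G.Adj u x) ∧ x ∈ G.undominated B := by
  simp [undominated]

theorem territory_subset_undominated : G.territory B r ⊆ G.undominated B :=
  fun _ ⟨p, hp⟩ => hp _ p.end_mem_support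

theorem self_mem_territory (hr : r ∈ G.undominated B) : r ∈ G.territory B r :=
  ⟨.nil, by simpa⟩

theorem territory_anti (h : B' ⊆ B) : G.territory B r ⊆ G.territory B' r :=
  fun _ ⟨p, hp⟩ => ⟨p, fun y hy => undominated_anti h (hp y hy)⟩

theorem territory_empty (hG : G.Connected) : G.territory ∅ r = univ :=
  eq_univ_of_forall fun x => ⟨(hG.preconnected r x).some, by simp [undominated]⟩

theorem mem_territory_of_adj (hx : x ∈ G.territory B r) (hxy : G.Adj x y)
    (hy : y ∈ G.undominated B) : y ∈ G.territory B r := by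
  obtain ⟨p, hp⟩ := hx
  refine ⟨p.concat hxy, fun z hz => ?_⟩
  rw [Walk.support_concat, List.mem_append, List.mem_singleton] at hz
  exact hz.elim (hp z) fun h => h ▸ hy

theorem mem_territory_comm (hx : x ∈ G.territory B r) : r ∈ G.territory B x := by
  obtain ⟨p, hp⟩ := hx
  exact ⟨p.reverse, by simpa using hp⟩

theorem territory_subset_of_mem (hx : x ∈ G.territory B r) :
    G.territory B x ⊆ G.territory B r := by
  rintro y ⟨q, hq⟩
  obtain ⟨p, hp⟩ := hx
  refine ⟨p.append q, fun z hz => ?_⟩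
  rw [Walk.mem_support_append_iff] at hz
  exact hz.elim (hp z) (hq z)

theorem territory_eq_of_mem (hx : x ∈ G.territory B r) : G.territory B x = G.territory B r :=
  (territory_subset_of_mem hx).antisymm (territory_subset_of_mem (mem_territory_comm hx))

theorem exists_adj_adj_territory_insert (hr : r ∈ G.undominated (insert u B))
    (hy : y ∈ G.territory B r) (huy : G.Adj u y) :
    ∃ w ∈ G.territory B r, G.Adj u w ∧ ∃ z ∈ G.territory (insert u B) r, G.Adj w z := by
  obtain ⟨p, hp⟩ := hy
  have hy' : y ∉ G.territory (insert u B) r :=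
    fun hy' => (mem_undominated_insert.1 (territory_subset_undominated hy')).1.2 huy
  -- the edge `ab` by which a walk to `y` leaves the new territory ends in `N(u)`
  obtain ⟨⟨⟨a, b⟩, hab⟩, hd, ha, hb⟩ := p.exists_boundary_dart _ (self_mem_territory hr) hy'
  have hbB : b ∈ G.undominated B := hp b (p.dart_snd_mem_support_of_mem_darts hd)
  have hau : a ≠ u ∧ ¬ G.Adj u a := (mem_undominated_insert.1 (territory_subset_undominated ha)).1
  have hub : G.Adj u b := by
    by_contra hub
    have hbu : b ≠ u := by rintro rfl; exact hau.2 hab.symm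
    exact hb (mem_territory_of_adj ha hab (mem_undominated_insert.2 ⟨⟨hbu, hub⟩, hbB⟩))
  exact ⟨b, mem_territory_of_adj (territory_anti (subset_insert _ _) ha) hab hbB, hub,
    a, ha, hab.symm⟩

theorem exists_pathGraph_embedding_snoc {m : ℕ} (f : pathGraph (m + 1) ↪g G)
    (hadj : G.Adj (f (Fin.last m)) x) (hx : x ∈ G.undominated (range (Fin.init f))) :
    ∃ f' : pathGraph (m + 2) ↪g G, ⇑f' = Fin.snoc (α := fun _ => V) f x := by
  have key : ∀ j : Fin (m + 1), f j ≠ x ∧ (G.Adj (f j) x ↔ j = Fin.last m) := by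
    intro j
    induction j using Fin.lastCases with
    | last => exact ⟨hadj.ne, iff_of_true hadj rfl⟩
    | cast j =>
      obtain ⟨hne, hnadj⟩ := hx _ ⟨j, rfl⟩
      exact ⟨hne.symm, iff_of_false hnadj (Fin.castSucc_lt_last j).ne⟩
  refine ⟨⟨⟨Fin.snoc (α := fun _ => V) f x, fun a b hab => ?_⟩, fun {a b} => ?_⟩, rfl⟩
  · induction a using Fin.lastCases <;> induction b using Fin.lastCases <;>
      simp_all [(key _).1.symm, (key _).1]
  · change G.Adj (Fin.snoc (α := fun _ => V) f x a) (Fin.snoc (α := fun _ => V) f x b) ↔ _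
    induction a using Fin.lastCases <;> induction b using Fin.lastCases <;>
      simp [pathGraph_adj, key, G.adj_comm x, Fin.ext_iff] <;> omega

end SimpleGraph

namespace CopsAndRobber

variable {V : Type*} (G : SimpleGraph V) {n : ℕ}

def IsCopMove (c c' : Fin n → V) : Prop := ∀ i, c' i = c i ∨ G.Adj (c i) (c' i)

def IsRobberMove (r r' : V) : Prop := r' = r ∨ G.Adj r r'

/-- Positions, with the cops to move, from which the cops can force a capture within `m` rounds. -/
def CapturableWithin : ℕ → Set ((Fin n → V) × V)
  | 0 => {s | ∃ i, s.1 i = s.2}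
  | m + 1 => CapturableWithin m ∪ {s | ∃ c', IsCopMove G s.1 c' ∧
      ((∃ i, c' i = s.2) ∨ ∀ r', IsRobberMove G s.2 r' → (c', r') ∈ CapturableWithin m)}

def Escapes (s : (Fin n → V) × V) : Prop := ∀ m, s ∉ CapturableWithin G m

theorem capturableWithin_mono : Monotone (CapturableWithin G (n := n)) :=
  monotone_nat_of_le_succ fun _ _ => Or.inl

theorem exists_isCopMove_progress (s : (Fin n → V) × V) :
    ∃ c', IsCopMove G s.1 c' ∧ ∀ m, s ∈ CapturableWithin G (m + 1) →
      s ∉ CapturableWithin G m →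
      (∃ i, c' i = s.2) ∨ ∀ r', IsRobberMove G s.2 r' → (c', r') ∈ CapturableWithin G m := by
  by_cases h : ∃ m, s ∈ CapturableWithin G (m + 1) ∧ s ∉ CapturableWithin G m
  · obtain ⟨m, hm, hm'⟩ := h
    obtain ⟨c', hc', hprogress⟩ := hm.resolve_left hm'
    refine ⟨c', hc', fun m' hm₁ hm₁' => ?_⟩
    obtain rfl : m' = m := by
      by_contra hne
      rcases Nat.lt_or_gt_of_ne hne with hlt | hlt
      · exact hm' (capturableWithin_mono G hlt hm₁)
      · exact hm₁' (capturableWithin_mono G hlt hm)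
    exact hprogress
  · push Not at h
    exact ⟨s.1, fun _ => Or.inl rfl, fun m hm hm' => (hm' (h m hm)).elim⟩

theorem copWinWith_of_forall_not_escapes [Nonempty V]
    (h : ∀ s : (Fin n → V) × V, ¬ Escapes G s) : CopWinWith G n := by
  -- the cops always move to a position of smaller capture rank
  choose F hF using fun c r => exists_isCopMove_progress G (n := n) (c, r)
  refine ⟨fun _ => Classical.arbitrary V, F, fun c r => (hF c r).1, fun r₀ rob hrob => ?_⟩
  set play := copsRobberSeq (fun _ => Classical.arbitrary V) F rob r₀
  suffices key : ∀ m t, play t ∈ CapturableWithin G m →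
      ∃ t, (∃ i, (play t).1 i = (play t).2) ∨ ∃ i, (play (t + 1)).1 i = (play t).2 by
    obtain ⟨m, hm⟩ := not_forall_not.1 (h (play 0))
    exact key m 0 hm
  intro m
  induction m with
  | zero => exact fun t ht => ⟨t, Or.inl ht⟩
  | succ m ih =>
    intro t ht
    by_cases ht' : play t ∈ CapturableWithin G m
    · exact ih t ht'
    rcases (hF _ _).2 m ht ht' with hcapture | hnext
    · exact ⟨t, Or.inr hcapture⟩
    · exact ih (t + 1) (hnext _ (hrob _ _))

variable {G} {s : (Fin n → V) × V}

theorem Escapes.ne (h : Escapes G s) (i : Fin n) : s.1 i ≠ s.2 := fun hi => h 0 ⟨i, hi⟩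

theorem Escapes.not_adj (h : Escapes G s) (i : Fin n) : ¬ G.Adj (s.1 i) s.2 := by
  classical
  intro hadj
  refine h 1 (Or.inr ⟨update s.1 i s.2, fun j => ?_, Or.inl ⟨i, update_self ..⟩⟩)
  rcases eq_or_ne j i with rfl | hj
  · simpa using Or.inr hadj
  · exact Or.inl (update_of_ne hj _ _)

theorem Escapes.mem_undominated (h : Escapes G s) {B : Set V} (hB : B ⊆ range s.1) :
    s.2 ∈ G.undominated B := by
  rintro b hb
  obtain ⟨i, rfl⟩ := hB hb
  exact ⟨(h.ne i).symm, h.not_adj i⟩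

theorem Escapes.exists_isRobberMove [Finite V] (h : Escapes G s) {c' : Fin n → V}
    (hc' : IsCopMove G s.1 c') : ∃ r', IsRobberMove G s.2 r' ∧ Escapes G (c', r') := by
  by_contra! hcapture
  choose! rank hrank using fun r' (hr' : IsRobberMove G s.2 r') =>
    not_forall_not.1 (hcapture r' hr')
  obtain ⟨M, hM⟩ := Finite.bddAbove_range rank
  exact h (M + 1) (Or.inr ⟨c', hc', Or.inr fun r' hr' =>
    capturableWithin_mono G (hM ⟨r', rfl⟩) (hrank r' hr')⟩)

theorem IsRobberMove.mem_territory {B : Set V} {r₀ r r' : V} (h : IsRobberMove G r r')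
    (hr : r ∈ G.territory B r₀) (hr' : r' ∈ G.undominated B) : r' ∈ G.territory B r₀ := by
  rcases h with rfl | hadj
  exacts [hr, mem_territory_of_adj hr hadj hr']

theorem Escapes.exists_update_of_walk [Finite V] (h : Escapes G s) {c : Fin n} {B : Set V}
    (hB : ∀ b ∈ B, ∃ j ≠ c, s.1 j = b) {u v : V} (hu : s.1 c = u) (p : G.Walk u v) :
    ∃ r' ∈ G.territory B s.2, Escapes G (update s.1 c v, r') := by
  classical
  induction p generalizing s with
  | nil =>
    have hB' : B ⊆ range s.1 := fun b hb => (hB b hb).imp fun _ => And.right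
    refine ⟨s.2, self_mem_territory (h.mem_undominated hB'), ?_⟩
    rwa [← hu, update_eq_self]
  | @cons u w v huw p ih =>
    have hmove : IsCopMove G s.1 (update s.1 c w) := fun j => by
      rcases eq_or_ne j c with rfl | hj
      · simpa [hu] using Or.inr huw
      · exact Or.inl (update_of_ne hj _ _)
    have hB' : ∀ b ∈ B, ∃ j ≠ c, update s.1 c w j = b := fun b hb => by
      obtain ⟨j, hj, rfl⟩ := hB b hb
      exact ⟨j, hj, update_of_ne hj _ _⟩
    obtain ⟨r₁, hr₁, h₁⟩ := h.exists_isRobberMove hmove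
    have hr₁B : r₁ ∈ G.territory B s.2 := by
      refine hr₁.mem_territory (self_mem_territory ?_) (h₁.mem_undominated ?_)
      · exact h.mem_undominated fun b hb => (hB b hb).imp fun _ => And.right
      · exact fun b hb => (hB' b hb).imp fun _ => And.right
    obtain ⟨r', hr', h'⟩ := ih h₁ hB' (update_self ..)
    exact ⟨r', territory_subset_of_mem hr₁B hr', by simpa using h'⟩

structure IsGuarding (s : (Fin n → V) × V) {i : ℕ} (hi : i + 1 ≤ n)
    (f : pathGraph (i + 1) ↪g G) : Prop where
  escapes : Escapes G s
  guard : ∀ j, s.1 (Fin.castLE hi j) = f j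
  exists_adj : ∃ y ∈ G.territory (range (Fin.init f)) s.2, G.Adj (f (Fin.last i)) y

theorem exists_isGuarding_zero (hG : G.Connected) (hs : Escapes G s) (hn : 1 ≤ n) :
    ∃ f : pathGraph 1 ↪g G, IsGuarding s hn f := by
  let c : Fin n := ⟨0, hn⟩
  let f : pathGraph 1 ↪g G :=
    ⟨⟨fun _ => s.1 c, fun a b _ => Subsingleton.elim (α := Fin 1) a b⟩, fun {a b} => by
      simp [Subsingleton.elim (α := Fin 1) a b]⟩
  obtain ⟨p⟩ := hG.preconnected (s.1 c) s.2
  refine ⟨f, hs, fun j => by rw [Subsingleton.elim (α := Fin 1) j 0]; rfl, p.snd, ?_,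
    p.adj_snd (Walk.not_nil_of_ne (hs.ne c))⟩
  simp [range_eq_empty, territory_empty hG]

namespace IsGuarding

variable {i : ℕ} {hi : i + 1 ≤ n} {f : pathGraph (i + 1) ↪g G}

theorem range_subset (hf : IsGuarding s hi f) : range f ⊆ range s.1 := by
  rintro _ ⟨j, rfl⟩
  exact ⟨_, hf.guard j⟩

theorem exists_snoc (hf : IsGuarding s hi f) :
    ∃ f' : pathGraph (i + 2) ↪g G, Fin.init f' = f ∧
      ∃ z ∈ G.territory (range f) s.2, G.Adj (f' (Fin.last _)) z := by
  have hrange : range f = insert (f (Fin.last i)) (range (Fin.init f)) := by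
    rw [← Fin.range_snoc, Fin.snoc_init_self]
  obtain ⟨y, hy, hadj⟩ := hf.exists_adj
  have hr := hf.escapes.mem_undominated hf.range_subset
  rw [hrange] at hr
  obtain ⟨w, hw, huw, z, hz, hwz⟩ := exists_adj_adj_territory_insert hr hy hadj
  obtain ⟨f', hf'⟩ := exists_pathGraph_embedding_snoc f huw (territory_subset_undominated hw)
  exact ⟨f', by rw [hf', Fin.init_snoc], z, hrange ▸ hz, by rwa [hf', Fin.snoc_last]⟩

theorem nonempty_pathGraph_embedding (hf : IsGuarding s hi f) :
    Nonempty (pathGraph (i + 3) ↪g G) := by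
  obtain ⟨f', hf', z, hz, hadj⟩ := hf.exists_snoc
  rw [← hf'] at hz
  obtain ⟨f'', -⟩ := exists_pathGraph_embedding_snoc f' hadj (territory_subset_undominated hz)
  exact ⟨f''⟩

theorem exists_succ [Finite V] (hG : G.Connected) (hf : IsGuarding s hi f) (hi' : i + 2 ≤ n) :
    ∃ (s' : (Fin n → V) × V) (f' : pathGraph (i + 2) ↪g G), IsGuarding s' hi' f' := by
  classical
  obtain ⟨f', hf', z, hz, hadj⟩ := hf.exists_snoc
  let c : Fin n := ⟨i + 1, hi'⟩
  have hguards : ∀ b ∈ range f, ∃ j ≠ c, s.1 j = b := by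
    rintro _ ⟨j, rfl⟩
    exact ⟨Fin.castLE hi j, Fin.ne_of_lt j.isLt, hf.guard j⟩
  obtain ⟨r', hr', hs'⟩ := hf.escapes.exists_update_of_walk hguards rfl
    (hG.preconnected (s.1 c) (f' (Fin.last _))).some
  refine ⟨(update s.1 c (f' (Fin.last _)), r'), f', hs', fun j => ?_, z, ?_, hadj⟩
  · induction j using Fin.lastCases with
    | last => exact update_self ..
    | cast j =>
      change update s.1 c _ (Fin.castLE hi j) = Fin.init f' j
      rw [congrFun hf' j, ← hf.guard j]
      exact update_of_ne (Fin.ne_of_lt j.isLt) _ _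
  · rwa [hf', territory_eq_of_mem hr']

end IsGuarding

theorem not_escapes_of_isEmpty_pathGraph_embedding [Finite V] (hG : G.Connected) {m : ℕ}
    (hfree : IsEmpty (pathGraph (m + 3) ↪g G)) {s : (Fin (m + 1) → V) × V} : ¬ Escapes G s := by
  intro hs
  have hstage : ∀ i (hi : i + 1 ≤ m + 1), ∃ (s' : (Fin (m + 1) → V) × V)
      (f : pathGraph (i + 1) ↪g G), IsGuarding s' hi f := by
    intro i
    induction i with
    | zero => exact fun hi => ⟨s, exists_isGuarding_zero hG hs hi⟩
    | succ i ih =>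
      intro hi
      obtain ⟨s', f, hf⟩ := ih (by omega)
      exact hf.exists_succ hG hi
  obtain ⟨s', f, hf⟩ := hstage m le_rfl
  exact hfree.false hf.nonempty_pathGraph_embedding.some

end CopsAndRobber

theorem pathFree_cop_bounded (k : ℕ) (hk : 3 ≤ k) :
    ∃ M : ℕ, M = k - 2 ∧
      ∀ (V : Type) [Fintype V] (G : SimpleGraph V),
        G.Connected → IsEmpty (pathGraph k ↪g G) → copNumber G ≤ M := by
  refine ⟨k - 2, rfl, fun V _ G hG hfree => ?_⟩
  obtain ⟨m, rfl⟩ : ∃ m, k = m + 3 := ⟨k - 3, by omega⟩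
  have := hG.nonempty
  exact Nat.sInf_le <| CopsAndRobber.copWinWith_of_forall_not_escapes G fun _ =>
    CopsAndRobber.not_escapes_of_isEmpty_pathGraph_embedding hG hfree
end
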